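/- Let {Φ_k}_{k∈K} (K a finite index set) be a partition of X into nonempty subsets, let E_m > 0 and ε_0 ≥ 0, and suppose E'(Φ_k) > 0 for every k. If f satisfies ε_k-differential privacy on each Φ_k where 0 ≤ ε_k ≤ min(ln(E'(Φ_k)/E_m), ε_0) for every k, then for every observed pseudo-location x' ∈ X with Σ_{y∈X} π(y)f(x'|y) > 0, the conditional expected inference error satisfies ExpEr(x') ≥ E_m. -/

import Mathlib

open Finset Real

/-!
Fix a guess `x̂` and a block `Φ` of the partition, with prior mass `P` and `D = Σ_{y∈Φ} π(y) f(x'|y)`.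
Within `Φ` the DP constraint gives `D ≤ e^ε P f(x'|x)` for every `x ∈ Φ`, so averaging `d(x̂, ·)`
against `π f(x'|·)` over `Φ` costs at least `D e^{-ε} E'(Φ) ≥ D E_m`. Summing over the blocks yields
`E_m · Σ_y π(y) f(x'|y) ≤ Σ_x π(x) f(x'|x) d(x̂, x)`, which is the claim after dividing by the
denominator.
-/

lemma sum_mul_sum_le_of_le_mul {ι : Type*} (s : Finset ι) (w g d : ι → ℝ) (c : ℝ)
    (hw : ∀ i ∈ s, 0 ≤ w i) (hd : ∀ i ∈ s, 0 ≤ d i)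
    (hg : ∀ i ∈ s, ∀ j ∈ s, g i ≤ c * g j) :
    (∑ i ∈ s, w i * g i) * ∑ i ∈ s, w i * d i ≤ c * (∑ i ∈ s, w i) * ∑ i ∈ s, w i * g i * d i := by
  have hD : ∀ j ∈ s, ∑ i ∈ s, w i * g i ≤ c * (∑ i ∈ s, w i) * g j := fun j hj =>
    calc ∑ i ∈ s, w i * g i ≤ ∑ i ∈ s, w i * (c * g j) :=
          sum_le_sum fun i hi => mul_le_mul_of_nonneg_left (hg i hi j hj) (hw i hi)
      _ = c * (∑ i ∈ s, w i) * g j := by rw [← sum_mul]; ring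
  rw [mul_sum, mul_sum]
  refine sum_le_sum fun j hj => ?_
  calc (∑ i ∈ s, w i * g i) * (w j * d j) ≤ c * (∑ i ∈ s, w i) * g j * (w j * d j) :=
        mul_le_mul_of_nonneg_right (hD j hj) (mul_nonneg (hw j hj) (hd j hj))
    _ = c * (∑ i ∈ s, w i) * (w j * g j * d j) := by ring

lemma mul_sum_le_sum_mul_dist_of_le_mul {X : Type*} [Fintype X] [Nonempty X] [MetricSpace X]
    (s : Finset X) (hs : s.Nonempty) (w g : X → ℝ) (hw : ∀ x ∈ s, 0 < w x)
    (hg0 : ∀ x ∈ s, 0 ≤ g x) (c : ℝ) (hc : 0 < c) (hg : ∀ x ∈ s, ∀ y ∈ s, g x ≤ c * g y)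
    (Em : ℝ) (hEm : Em * c ≤
      univ.inf' univ_nonempty (fun xhat => ∑ x ∈ s, (w x / ∑ y ∈ s, w y) * dist xhat x))
    (xhat : X) :
    Em * ∑ x ∈ s, w x * g x ≤ ∑ x ∈ s, w x * g x * dist xhat x := by
  set P := ∑ y ∈ s, w y
  set D := ∑ x ∈ s, w x * g x
  have hP : 0 < P := sum_pos hw hs
  have hD : 0 ≤ D := sum_nonneg fun x hx => mul_nonneg (hw x hx).le (hg0 x hx)
  have herr : Em * c * P ≤ ∑ x ∈ s, w x * dist xhat x :=
    calc Em * c * P ≤ (∑ x ∈ s, (w x / P) * dist xhat x) * P :=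
          mul_le_mul_of_nonneg_right (hEm.trans (inf'_le _ (mem_univ xhat))) hP.le
      _ = ∑ x ∈ s, w x * dist xhat x := by
          rw [sum_mul]; exact sum_congr rfl fun x _ => by field_simp
  have hblock := sum_mul_sum_le_of_le_mul s w g (dist xhat) c
    (fun x hx => (hw x hx).le) (fun _ _ => dist_nonneg) hg
  refine le_of_mul_le_mul_left ?_ (mul_pos hc hP)
  calc c * P * (Em * D) = D * (Em * c * P) := by ring
    _ ≤ D * ∑ x ∈ s, w x * dist xhat x := mul_le_mul_of_nonneg_left herr hD
    _ ≤ c * P * ∑ x ∈ s, w x * g x * dist xhat x := hblock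

lemma sum_eq_sum_sum_of_partition {X K : Type*} [Fintype X] [Fintype K] [DecidableEq X]
    (Φ : K → Finset X) (hdisj : ∀ k l, k ≠ l → Disjoint (Φ k) (Φ l))
    (hcov : ∀ x : X, ∃ k, x ∈ Φ k) (g : X → ℝ) :
    ∑ x, g x = ∑ k, ∑ x ∈ Φ k, g x := by
  rw [← sum_biUnion fun k _ l _ hkl => hdisj k l hkl]
  congr
  ext x
  simpa using hcov x

theorem stmt_1_general {X : Type*} [Fintype X] [Nonempty X] [MetricSpace X]
    (pr : X → ℝ) (hprpos : ∀ x, 0 < pr x)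
    (f : X → X → ℝ) (hf0 : ∀ x x', 0 ≤ f x x')
    {K : Type*} [Fintype K] (Φ : K → Finset X)
    (hne : ∀ k, (Φ k).Nonempty)
    (hdisj : ∀ k l, k ≠ l → Disjoint (Φ k) (Φ l))
    (hcov : ∀ x : X, ∃ k, x ∈ Φ k)
    (Em : ℝ) (hEm : 0 < Em)
    (ε₀ : ℝ)
    (hEppos : ∀ k,
      0 < univ.inf' univ_nonempty
            (fun xhat => ∑ x ∈ Φ k, (pr x / ∑ y ∈ Φ k, pr y) * dist xhat x))
    (ε : K → ℝ)
    (hε : ∀ k, 0 ≤ ε k ∧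
      ε k ≤ min
        (Real.log
          ((univ.inf' univ_nonempty
              (fun xhat => ∑ x ∈ Φ k, (pr x / ∑ y ∈ Φ k, pr y) * dist xhat x)) / Em))
        ε₀)
    (hDP : ∀ k, ∀ x ∈ Φ k, ∀ y ∈ Φ k, ∀ x' : X, f x x' ≤ Real.exp (ε k) * f y x')
    (x' : X) (hden : 0 < ∑ y, pr y * f y x') :
    Em ≤
      univ.inf' univ_nonempty
        (fun xhat => ∑ x, (pr x * f x x' / ∑ y, pr y * f y x') * dist xhat x) := by
  classical
  have hratio : ∀ k, Em * exp (ε k) ≤ univ.inf' univ_nonempty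
      (fun xhat => ∑ x ∈ Φ k, (pr x / ∑ y ∈ Φ k, pr y) * dist xhat x) := fun k => by
    rw [mul_comm, ← le_div_iff₀ hEm, ← le_log_iff_exp_le (div_pos (hEppos k) hEm)]
    exact (hε k).2.trans (min_le_left _ _)
  refine le_inf' _ _ fun xhat _ => ?_
  simp only [div_mul_eq_mul_div, ← sum_div]
  rw [le_div_iff₀ hden]
  have hpart := sum_eq_sum_sum_of_partition Φ hdisj hcov
  calc Em * ∑ y, pr y * f y x' = ∑ k, Em * ∑ y ∈ Φ k, pr y * f y x' := by rw [hpart, mul_sum]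
    _ ≤ ∑ k, ∑ x ∈ Φ k, pr x * f x x' * dist xhat x := sum_le_sum fun k _ =>
        mul_sum_le_sum_mul_dist_of_le_mul (Φ k) (hne k) pr (f · x') (fun x _ => hprpos x)
          (fun x _ => hf0 x x') _ (exp_pos _) (fun x hx y hy => hDP k x hx y hy x') Em (hratio k) xhat
    _ = ∑ x, pr x * f x x' * dist xhat x := (hpart _).symm

/-- If {Φ_k} is a partition of X with E'(Φ_k) > 0, E_m > 0, ε_0 ≥ 0,
and f satisfies ε_k-DP on each Φ_k where 0 ≤ ε_k ≤ min(ln(E'(Φ_k)/E_m), ε_0), then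
for every observed x' with positive denominator, ExpEr(x') ≥ E_m. -/
theorem stmt_1 {X : Type*} [Fintype X] [Nonempty X] [MetricSpace X]
    (pr : X → ℝ) (hprpos : ∀ x, 0 < pr x) (hprsum : ∑ x, pr x = 1)
    (f : X → X → ℝ) (hf0 : ∀ x x', 0 ≤ f x x') (hf1 : ∀ x, ∑ x', f x x' = 1)
    {K : Type*} [Fintype K] (Φ : K → Finset X)
    (hne : ∀ k, (Φ k).Nonempty)
    (hdisj : ∀ k l, k ≠ l → Disjoint (Φ k) (Φ l))
    (hcov : ∀ x : X, ∃ k, x ∈ Φ k)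
    (Em : ℝ) (hEm : 0 < Em)
    (ε₀ : ℝ) (hε₀ : 0 ≤ ε₀)
    (hEppos : ∀ k,
      0 < univ.inf' univ_nonempty
            (fun xhat => ∑ x ∈ Φ k, (pr x / ∑ y ∈ Φ k, pr y) * dist xhat x))
    (ε : K → ℝ)
    (hε : ∀ k, 0 ≤ ε k ∧
      ε k ≤ min
        (Real.log
          ((univ.inf' univ_nonempty
              (fun xhat => ∑ x ∈ Φ k, (pr x / ∑ y ∈ Φ k, pr y) * dist xhat x)) / Em))
        ε₀)
    (hDP : ∀ k, ∀ x ∈ Φ k, ∀ y ∈ Φ k, ∀ x' : X, f x x' ≤ Real.exp (ε k) * f y x')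
    (x' : X) (hden : 0 < ∑ y, pr y * f y x') :
    Em ≤
      univ.inf' univ_nonempty
        (fun xhat => ∑ x, (pr x * f x x' / ∑ y, pr y * f y x') * dist xhat x) :=
  stmt_1_general pr hprpos f hf0 Φ hne hdisj hcov Em hEm ε₀ hEppos ε hε hDP x' hden
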